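/- arXiv:2511.07216 — 3 statements merged into one kernel-verified Lean document; each statement's English description precedes it below -/
import Mathlib

section
/- Let K be a compact Hausdorff topological space, n a positive integer, and ψ : K → (Fin n → ℂ) a continuous map with ‖ψ θ‖ = 1 in the ℓ²-norm for every θ ∈ K, satisfying the separation hypothesis (S): for all θ₁ ≠ θ₂ in K, ‖⟪ψ θ₁, ψ θ₂⟫_ℂ‖ < 1. Then the family F of QNode expectation functions is dense in the space C(K, ℝ) of continuous real-valued functions on K equipped with the supremum norm: for every continuous g : K → ℝ and every ε > 0 there exists f ∈ F with sup_{θ ∈ K} |f θ − g θ| ≤ ε. -/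
open scoped BigOperators ComplexConjugate
open MeasureTheory Matrix

/-- The `k`-fold tensor power of the parametrized state `ψ`:
`ψ^{⊗k} θ i = ∏_{j : Fin k} ψ θ (i j)`. -/
noncomputable def tensorPow {K : Type*} {n : ℕ} (ψ : K → EuclideanSpace ℂ (Fin n))
    (k : ℕ) (θ : K) : (Fin k → Fin n) → ℂ :=
  fun i => ∏ j : Fin k, ψ θ (i j)

/-- The family of QNode expectation functions: real parts of expectation values of Hermitian
observables (possibly on an ancilla-extended register, i.e. on a tensor power) in the state
`ψ θ`. -/
noncomputable def QNodeFamily {K : Type*} {n : ℕ}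
    (ψ : K → EuclideanSpace ℂ (Fin n)) : Set (K → ℝ) :=
  { f | ∃ (k : ℕ) (A : Matrix (Fin k → Fin n) (Fin k → Fin n) ℂ),
      Aᴴ = A ∧ ∀ θ : K, f θ = (star (tensorPow ψ k θ) ⬝ᵥ A.mulVec (tensorPow ψ k θ)).re }

/-!
Expectation values on tensor powers multiply under Kronecker products,
`⟨ψ^{⊗(k+l)}| A ⊗ B |ψ^{⊗(k+l)}⟩ = ⟨ψ^{⊗k}| A |ψ^{⊗k}⟩ ⟨ψ^{⊗l}| B |ψ^{⊗l}⟩`, and for normalized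
states they add via `A ⊗ 1 + 1 ⊗ B`; observables on the empty register give the constants.
So the QNode functions form a subalgebra of `C(K, ℝ)`. The projector `|ψ θ₁⟩⟨ψ θ₁|` yields
`θ ↦ ‖⟪ψ θ₁, ψ θ⟫‖²`, which is `1` at `θ₁` and `< 1` elsewhere by (S), so the subalgebra
separates points and Stone–Weierstrass applies.
-/

open scoped Kronecker InnerProductSpace

namespace Matrix

variable {R : Type*} [CommSemiring R] {m m' p p' : Type*} [Fintype m'] [Fintype p']

theorem kronecker_mulVec_mul (A : Matrix m m' R) (B : Matrix p p' R) (a : m' → R) (b : p' → R) :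
    (A ⊗ₖ B) *ᵥ (fun q => a q.1 * b q.2) = fun q => (A *ᵥ a) q.1 * (B *ᵥ b) q.2 := by
  ext ⟨i, j⟩
  simp only [mulVec, dotProduct, kronecker_apply, Fintype.sum_prod_type, Finset.sum_mul_sum]
  exact Finset.sum_congr rfl fun _ _ => Finset.sum_congr rfl fun _ _ => by ring

theorem mul_dotProduct_mul (u a : m' → R) (v b : p' → R) :
    (fun q : m' × p' => u q.1 * v q.2) ⬝ᵥ (fun q => a q.1 * b q.2) = (u ⬝ᵥ a) * (v ⬝ᵥ b) := by
  simp only [dotProduct, Fintype.sum_prod_type, Finset.sum_mul_sum]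
  exact Finset.sum_congr rfl fun _ _ => Finset.sum_congr rfl fun _ _ => by ring

theorem star_dotProduct_kronecker_mulVec [StarRing R] (A : Matrix m' m' R) (B : Matrix p' p' R)
    (a : m' → R) (b : p' → R) :
    star (fun q : m' × p' => a q.1 * b q.2) ⬝ᵥ (A ⊗ₖ B) *ᵥ (fun q => a q.1 * b q.2) =
      (star a ⬝ᵥ A *ᵥ a) * (star b ⬝ᵥ B *ᵥ b) := by
  have star_prod : star (fun q : m' × p' => a q.1 * b q.2) = fun q => star a q.1 * star b q.2 := by
    ext q; exact star_mul' _ _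
  rw [star_prod, kronecker_mulVec_mul, mul_dotProduct_mul]

theorem star_dotProduct_vecMulVec_star_mulVec [StarRing R] (u v : m' → R) :
    star v ⬝ᵥ vecMulVec u (star u) *ᵥ v = star (star u ⬝ᵥ v) * (star u ⬝ᵥ v) := by
  rw [vecMulVec_mulVec, dotProduct_smul, star_dotProduct, star_star]
  simp

theorem star_dotProduct_reindex_mulVec [StarRing R] [Fintype m] (e : m ≃ m') (A : Matrix m m R)
    (v : m' → R) : star v ⬝ᵥ reindex e e A *ᵥ v = star (v ∘ e) ⬝ᵥ A *ᵥ (v ∘ e) := by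
  rw [reindex_apply, submatrix_mulVec_equiv, Equiv.symm_symm, dotProduct_comp_equiv_symm]
  rfl

theorem IsHermitian.kronecker {S : Type*} [CommMagma S] [StarMul S] {A : Matrix m m S}
    {B : Matrix p p S} (hA : A.IsHermitian) (hB : B.IsHermitian) : (A ⊗ₖ B).IsHermitian := by
  rw [IsHermitian, conjTranspose_kronecker, hA.eq, hB.eq]

/-- `A ⊗ B` on the register `Fin (k + l) → α`, with `A` acting on the first `k` sites and `B` on
the last `l`. -/
def appendKronecker {S α : Type*} [Mul S] {k l : ℕ} (A : Matrix (Fin k → α) (Fin k → α) S)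
    (B : Matrix (Fin l → α) (Fin l → α) S) : Matrix (Fin (k + l) → α) (Fin (k + l) → α) S :=
  reindex (Fin.appendEquiv k l) (Fin.appendEquiv k l) (A ⊗ₖ B)

end Matrix

section TensorPow

variable {K : Type*} {n : ℕ} (ψ : K → EuclideanSpace ℂ (Fin n))

theorem tensorPow_zero (θ : K) : tensorPow ψ 0 θ = fun _ => 1 := by
  ext i
  simp [tensorPow]

theorem tensorPow_comp_appendEquiv (k l : ℕ) (θ : K) :
    tensorPow ψ (k + l) θ ∘ Fin.appendEquiv k l =
      fun q => tensorPow ψ k θ q.1 * tensorPow ψ l θ q.2 := by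
  ext q
  simp [tensorPow, Fin.prod_univ_add]

theorem star_tensorPow_dotProduct_tensorPow (k : ℕ) (θ θ' : K) :
    star (tensorPow ψ k θ) ⬝ᵥ tensorPow ψ k θ' = ⟪ψ θ, ψ θ'⟫_ℂ ^ k := by
  rw [EuclideanSpace.inner_eq_star_dotProduct, dotProduct_comm, dotProduct, dotProduct,
    Fintype.sum_pow]
  simp [tensorPow, Finset.prod_mul_distrib]

theorem star_tensorPow_dotProduct_self {ψ : K → EuclideanSpace ℂ (Fin n)}
    (hψ : ∀ θ, ‖ψ θ‖ = 1) (k : ℕ) (θ : K) :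
    star (tensorPow ψ k θ) ⬝ᵥ tensorPow ψ k θ = 1 := by
  rw [star_tensorPow_dotProduct_tensorPow, inner_self_eq_norm_sq_to_K, hψ]
  simp

theorem star_tensorPow_dotProduct_appendKronecker_mulVec {k l : ℕ}
    (A : Matrix (Fin k → Fin n) (Fin k → Fin n) ℂ) (B : Matrix (Fin l → Fin n) (Fin l → Fin n) ℂ)
    (θ : K) :
    star (tensorPow ψ (k + l) θ) ⬝ᵥ A.appendKronecker B *ᵥ tensorPow ψ (k + l) θ =
      (star (tensorPow ψ k θ) ⬝ᵥ A *ᵥ tensorPow ψ k θ) *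
        (star (tensorPow ψ l θ) ⬝ᵥ B *ᵥ tensorPow ψ l θ) := by
  rw [Matrix.appendKronecker, Matrix.star_dotProduct_reindex_mulVec, tensorPow_comp_appendEquiv,
    Matrix.star_dotProduct_kronecker_mulVec]

theorem continuous_tensorPow [TopologicalSpace K] {ψ : K → EuclideanSpace ℂ (Fin n)}
    (hψ : Continuous ψ) (k : ℕ) : Continuous (tensorPow ψ k) :=
  continuous_pi fun i => continuous_finsetProd _ fun j _ =>
    (continuous_apply (i j)).comp ((PiLp.continuous_ofLp 2 _).comp hψ)

end TensorPow

namespace QNodeFamily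

variable {K : Type*} {n : ℕ} {ψ : K → EuclideanSpace ℂ (Fin n)} {f g : K → ℝ}

theorem const_mem (r : ℝ) : (fun _ => r) ∈ QNodeFamily ψ := by
  refine ⟨0, (r : ℂ) • 1, ?_, fun θ => ?_⟩
  · simp [Matrix.conjTranspose_smul]
  · rw [Matrix.smul_mulVec, Matrix.one_mulVec, dotProduct_smul, tensorPow_zero]
    simp [dotProduct]

theorem mul_mem (hf : f ∈ QNodeFamily ψ) (hg : g ∈ QNodeFamily ψ) : f * g ∈ QNodeFamily ψ := by
  obtain ⟨k, A, hA, hfA⟩ := hf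
  obtain ⟨l, B, hB, hgB⟩ := hg
  refine ⟨k + l, A.appendKronecker B, (Matrix.IsHermitian.kronecker hA hB).reindex _, fun θ => ?_⟩
  have hA_im : (star (tensorPow ψ k θ) ⬝ᵥ A *ᵥ tensorPow ψ k θ).im = 0 :=
    Matrix.IsHermitian.im_star_dotProduct_mulVec_self hA _
  have hB_im : (star (tensorPow ψ l θ) ⬝ᵥ B *ᵥ tensorPow ψ l θ).im = 0 :=
    Matrix.IsHermitian.im_star_dotProduct_mulVec_self hB _
  rw [star_tensorPow_dotProduct_appendKronecker_mulVec, Complex.mul_re, hA_im, hB_im, mul_zero,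
    sub_zero, ← hfA, ← hgB, Pi.mul_apply]

theorem add_mem (hψ : ∀ θ, ‖ψ θ‖ = 1) (hf : f ∈ QNodeFamily ψ) (hg : g ∈ QNodeFamily ψ) :
    f + g ∈ QNodeFamily ψ := by
  obtain ⟨k, A, hA, hfA⟩ := hf
  obtain ⟨l, B, hB, hgB⟩ := hg
  refine ⟨k + l, A.appendKronecker 1 + (1 : Matrix (Fin k → Fin n) _ ℂ).appendKronecker B,
    ?_, fun θ => ?_⟩
  · exact ((Matrix.IsHermitian.kronecker hA Matrix.isHermitian_one).reindex _).add
      ((Matrix.IsHermitian.kronecker Matrix.isHermitian_one hB).reindex _)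
  · rw [Matrix.add_mulVec, dotProduct_add, star_tensorPow_dotProduct_appendKronecker_mulVec,
      star_tensorPow_dotProduct_appendKronecker_mulVec, Matrix.one_mulVec, Matrix.one_mulVec,
      star_tensorPow_dotProduct_self hψ, star_tensorPow_dotProduct_self hψ, mul_one, one_mul,
      Complex.add_re, ← hfA, ← hgB, Pi.add_apply]

theorem continuous [TopologicalSpace K] (hψ : Continuous ψ) (hf : f ∈ QNodeFamily ψ) :
    Continuous f := by
  obtain ⟨k, A, -, hfA⟩ := hf
  rw [funext hfA]
  have := continuous_tensorPow hψ k
  exact Complex.continuous_re.comp (this.star.dotProduct (continuous_const.matrix_mulVec this))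

theorem norm_inner_sq_mem (θ₀ : K) : (fun θ => ‖⟪ψ θ₀, ψ θ⟫_ℂ‖ ^ 2) ∈ QNodeFamily ψ := by
  set u := tensorPow ψ 1 θ₀
  refine ⟨1, Matrix.vecMulVec u (star u), ?_, fun θ => ?_⟩
  · rw [Matrix.conjTranspose_vecMulVec, star_star]
  · rw [Matrix.star_dotProduct_vecMulVec_star_mulVec, star_tensorPow_dotProduct_tensorPow, pow_one,
      Complex.star_def, ← Complex.normSq_eq_conj_mul_self, Complex.ofReal_re,
      Complex.normSq_eq_norm_sq]

end QNodeFamily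

section StoneWeierstrass

variable {K : Type*} [TopologicalSpace K] {n : ℕ} {ψ : K → EuclideanSpace ℂ (Fin n)}

def qnodeSubalgebra (hψ : ∀ θ, ‖ψ θ‖ = 1) : Subalgebra ℝ C(K, ℝ) where
  carrier := {f | ⇑f ∈ QNodeFamily ψ}
  mul_mem' := QNodeFamily.mul_mem
  add_mem' := QNodeFamily.add_mem hψ
  algebraMap_mem' := QNodeFamily.const_mem

theorem qnodeSubalgebra_separatesPoints (hψ_cont : Continuous ψ) (hψ_norm : ∀ θ, ‖ψ θ‖ = 1)
    (hψ_sep : ∀ θ₁ θ₂ : K, θ₁ ≠ θ₂ → ‖⟪ψ θ₁, ψ θ₂⟫_ℂ‖ < 1) :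
    (qnodeSubalgebra hψ_norm).SeparatesPoints := by
  intro θ₁ θ₂ hne
  have hmem := QNodeFamily.norm_inner_sq_mem (ψ := ψ) θ₁
  refine ⟨_, ⟨⟨_, QNodeFamily.continuous hψ_cont hmem⟩, hmem, rfl⟩, ?_⟩
  show ‖⟪ψ θ₁, ψ θ₁⟫_ℂ‖ ^ 2 ≠ ‖⟪ψ θ₁, ψ θ₂⟫_ℂ‖ ^ 2
  rw [inner_self_eq_norm_sq_to_K, hψ_norm]
  simpa using (pow_lt_one₀ (norm_nonneg _) (hψ_sep θ₁ θ₂ hne) two_ne_zero).ne'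

end StoneWeierstrass

theorem qnode_universal_approximation_uniform_general
    {K : Type*} [TopologicalSpace K] [CompactSpace K]
    {n : ℕ} (ψ : K → EuclideanSpace ℂ (Fin n))
    (hψ_cont : Continuous ψ) (hψ_norm : ∀ θ : K, ‖ψ θ‖ = 1)
    (hψ_sep : ∀ θ₁ θ₂ : K, θ₁ ≠ θ₂ → ‖(inner ℂ (ψ θ₁) (ψ θ₂) : ℂ)‖ < 1) :
    ∀ g : C(K, ℝ), ∀ ε > 0, ∃ f ∈ QNodeFamily ψ, ∀ θ : K, |f θ - g θ| ≤ ε := by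
  intro g ε hε
  obtain ⟨f, hf⟩ := ContinuousMap.exists_mem_subalgebra_near_continuous_of_separatesPoints _
    (qnodeSubalgebra_separatesPoints hψ_cont hψ_norm hψ_sep) g g.continuous ε hε
  exact ⟨f, f.2, fun θ => (hf θ).le⟩

/-- Lemma 1 (uniform version): under the normalization and point-separation hypotheses on the
parametrized quantum state `ψ`, the QNode expectation functions are dense in `C(K, ℝ)` in the
supremum norm. -/
theorem qnode_universal_approximation_uniform
    {K : Type*} [TopologicalSpace K] [CompactSpace K] [T2Space K]
    {n : ℕ} (hn : 0 < n) (ψ : K → EuclideanSpace ℂ (Fin n))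
    (hψ_cont : Continuous ψ) (hψ_norm : ∀ θ : K, ‖ψ θ‖ = 1)
    (hψ_sep : ∀ θ₁ θ₂ : K, θ₁ ≠ θ₂ → ‖(inner ℂ (ψ θ₁) (ψ θ₂) : ℂ)‖ < 1) :
    ∀ g : C(K, ℝ), ∀ ε > 0, ∃ f ∈ QNodeFamily ψ, ∀ θ : K, |f θ - g θ| ≤ ε :=
  qnode_universal_approximation_uniform_general ψ hψ_cont hψ_norm hψ_sep
end

section
/- Let K ⊆ ℝ be a compact set, let μ be a finite Borel measure on K, let 1 ≤ p < ∞, and let σ : ℝ → ℝ be a continuous bounded function which is not a polynomial (there is no polynomial P ∈ ℝ[X] with σ x = P.eval x for all x ∈ ℝ). Then the set of one-hidden-layer neural network functions, i.e. functions of the form x ↦ ∑_{i=1}^{m} c_i · σ (w_i * x + b_i) for some m ∈ ℕ and c, w, b ∈ ℝ^m, is dense in L^p(μ; ℝ): for every g ∈ L^p(μ; ℝ) and ε > 0 there exist such parameters with ‖∑_{i=1}^{m} c_i · σ (w_i * · + b_i) − g‖_{L^p(μ)} ≤ ε. -/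
/-!
Smoothing `σ` with a bump function `φ` keeps the ridge functions `x ↦ (φ ⋆ σ) (w * x + b)` in
the closed span of those of `σ`, since they are integrals of translates of `σ`. As `φ ⋆ σ` is
smooth, differentiating `k` times in `w` at `w = 0` puts `x ↦ x ^ k * (φ ⋆ σ)⁽ᵏ⁾ b` in the
closed span too. If all these coefficients vanished, every `φ ⋆ σ` would be a bounded polynomial,
hence constant, and so would be their limit `σ`. Hence all monomials, and by Weierstrass all
continuous functions on `K`, are uniform limits of networks; continuous functions are dense in
`L^p(μ)` for `p < ∞`, and on a finite measure space uniform convergence implies `L^p`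
convergence.
-/

open MeasureTheory Filter Set Polynomial
open scoped ENNReal Topology Convolution

theorem Polynomial.exists_derivative_eq {R : Type*} [Field R] [CharZero R] (P : R[X]) :
    ∃ Q : R[X], derivative Q = P := by
  induction P using Polynomial.induction_on' with
  | add p q hp hq =>
    obtain ⟨Qp, rfl⟩ := hp
    obtain ⟨Qq, rfl⟩ := hq
    exact ⟨Qp + Qq, derivative_add⟩
  | monomial n a =>
    refine ⟨monomial (n + 1) (a / (n + 1)), ?_⟩
    rw [derivative_monomial, Nat.add_sub_cancel, Nat.cast_add_one,
      div_mul_cancel₀ _ (Nat.cast_add_one_ne_zero n)]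

theorem Polynomial.eq_C_of_forall_abs_eval_le (P : ℝ[X]) {C : ℝ} (h : ∀ x, |P.eval x| ≤ C) :
    P = Polynomial.C (P.coeff 0) := by
  refine eq_C_of_degree_le_zero (not_lt.mp fun hdeg => ?_)
  obtain ⟨x, hx⟩ := ((P.abs_tendsto_atTop hdeg).eventually_gt_atTop C).exists
  exact (h x).not_gt hx

theorem exists_eval_eq_of_iteratedDeriv_eq_zero {k : ℕ} {f : ℝ → ℝ} (hf : ContDiff ℝ k f)
    (hk : iteratedDeriv k f = 0) : ∃ P : ℝ[X], ∀ x, f x = P.eval x := by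
  induction k generalizing f with
  | zero => exact ⟨0, fun x => by simpa using congrFun hk x⟩
  | succ k ih =>
    obtain ⟨hdiff, -, hderiv⟩ := (contDiff_succ_iff_deriv (n := k)).mp (by exact_mod_cast hf)
    obtain ⟨P, hP⟩ := ih hderiv (by rwa [← iteratedDeriv_succ'])
    obtain ⟨Q, rfl⟩ := P.exists_derivative_eq
    have hconst : ∀ x, f x - Q.eval x = f 0 - Q.eval 0 := fun x =>
      is_const_of_deriv_eq_zero (hdiff.sub Q.differentiable) (fun y => by
        rw [deriv_sub (hdiff y) (Q.differentiable y), hP y, Polynomial.deriv, sub_self]) x 0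
    refine ⟨Q + Polynomial.C (f 0 - Q.eval 0), fun x => ?_⟩
    rw [eval_add, eval_C, ← hconst x]
    ring

theorem Submodule.integral_mem {E α : Type*} [NormedAddCommGroup E] [NormedSpace ℝ E]
    [CompleteSpace E] [MeasurableSpace α] {μ : Measure α} {W : Submodule ℝ E}
    (hW : IsClosed (W : Set E)) {f : α → E} (hf : ∀ a, f a ∈ W) : ∫ a, f a ∂μ ∈ W := by
  by_cases hfi : Integrable f μ
  · rw [← Submodule.Quotient.mk_eq_zero, ← W.mkQ_apply, ← W.coe_mkQL,
      ← W.mkQL.integral_comp_comm hfi]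
    simp [(Submodule.Quotient.mk_eq_zero W).mpr (hf _)]
  · simp [integral_undef hfi, W.zero_mem]

theorem HasDerivAt.mem_of_isClosed {𝕜 E : Type*} [NontriviallyNormedField 𝕜]
    [NormedAddCommGroup E] [NormedSpace 𝕜 E] {W : Submodule 𝕜 E} (hW : IsClosed (W : Set E))
    {f : 𝕜 → E} {f' : E} {t : 𝕜} (hf : HasDerivAt f f' t) (hfW : ∀ s, f s ∈ W) : f' ∈ W :=
  hW.mem_of_tendsto hf.tendsto_slope_zero
    (Eventually.of_forall fun _ => W.smul_mem _ (W.sub_mem (hfW _) (hfW _)))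

theorem ContinuousMap.hasDerivAt_of_apply_eq_mul_comp {X : Type*} [TopologicalSpace X]
    [CompactSpace X] {G G' : ℝ → ℝ} (hG : ∀ y, HasDerivAt G (G' y) y) (hG' : Continuous G')
    {a u v : X → ℝ} (ha : Continuous a) (hu : Continuous u) (hv : Continuous v)
    {Ψ : ℝ → C(X, ℝ)} (hΨ : ∀ h x, Ψ h x = a x * G (v x + h * u x))
    {g : C(X, ℝ)} (hg : ∀ x, g x = a x * u x * G' (v x)) : HasDerivAt Ψ g 0 := by
  -- the slopes are `∫ t in 0..1, a * u * G' (v + t h u)`, which is jointly continuous in `(h, x)`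
  let Φ : C(ℝ × X, ℝ) :=
    ⟨fun q => ∫ t in (0 : ℝ)..1, a q.2 * u q.2 * G' (v q.2 + t * q.1 * u q.2),
      intervalIntegral.continuous_parametric_intervalIntegral_of_continuous' (by fun_prop) 0 1⟩
  have hΦ₀ : Φ.curry 0 = g := by ext x; simp [Φ, hg]
  have hΦ : ∀ h ≠ 0, Φ.curry h = h⁻¹ • (Ψ (0 + h) - Ψ 0) := by
    intro h hh
    ext x
    have hFTC := intervalIntegral.integral_deriv_comp_mul_deriv (a := 0) (b := 1)
      (f := fun t => v x + t * h * u x) (f' := fun _ => h * u x) (g := G) (g' := G')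
      (fun t _ => by
        simpa [mul_assoc] using ((hasDerivAt_id t).mul_const (h * u x)).const_add (v x))
      (fun t _ => hG _) continuousOn_const hG'
    simp only [Function.comp_def, one_mul, zero_mul, add_zero] at hFTC
    calc Φ.curry h x = a x * h⁻¹ * ∫ t in (0 : ℝ)..1, G' (v x + t * h * u x) * (h * u x) := by
          rw [← intervalIntegral.integral_const_mul]
          refine intervalIntegral.integral_congr fun t _ => ?_
          field_simp
      _ = (h⁻¹ • (Ψ (0 + h) - Ψ 0)) x := by
          rw [hFTC]
          simp only [zero_add, ContinuousMap.coe_smul, ContinuousMap.coe_sub, Pi.smul_apply,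
            Pi.sub_apply, hΨ, zero_mul, add_zero, smul_eq_mul]
          ring
  rw [hasDerivAt_iff_tendsto_slope_zero, ← hΦ₀]
  exact ((Φ.curry.continuous.tendsto 0).mono_left nhdsWithin_le_nhds).congr'
    (eventually_nhdsWithin_of_forall hΦ)

def ridgeFunctions (K : Set ℝ) (F : ℝ → ℝ) : Set C(K, ℝ) :=
  {g | ∃ w b : ℝ, ∀ x : K, g x = F (w * x + b)}

theorem ridgeFunctions_convolution_subset {K : Set ℝ} [CompactSpace K] {σ φ : ℝ → ℝ}
    (hσ : Continuous σ) (hφ : Continuous φ) (hφc : HasCompactSupport φ) :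
    ridgeFunctions K (φ ⋆[ContinuousLinearMap.lsmul ℝ ℝ] σ) ⊆
      (Submodule.span ℝ (ridgeFunctions K σ)).topologicalClosure := by
  rintro g ⟨w, b, hg⟩
  let Γ : C(ℝ × K, ℝ) := ⟨fun q => φ q.1 * σ (w * q.2 + (b - q.1)), by fun_prop⟩
  have hΓW : ∀ y, Γ.curry y ∈ (Submodule.span ℝ (ridgeFunctions K σ)).topologicalClosure := by
    intro y
    have hridge : (⟨fun x : K => σ (w * x + (b - y)), by fun_prop⟩ : C(K, ℝ)) ∈
        ridgeFunctions K σ := ⟨w, b - y, fun x => rfl⟩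
    have : Γ.curry y = φ y • (⟨fun x : K => σ (w * x + (b - y)), by fun_prop⟩ : C(K, ℝ)) := rfl
    rw [this]
    exact Submodule.le_topologicalClosure _
      (Submodule.smul_mem _ _ (Submodule.subset_span hridge))
  have hΓint : Integrable (fun y => Γ.curry y) := by
    refine Γ.curry.continuous.integrable_of_hasCompactSupport (hφc.mono fun y hy => ?_)
    rw [Function.mem_support] at hy ⊢
    contrapose! hy
    ext x
    simp [Γ, hy]
  have : g = ∫ y, Γ.curry y := by
    ext x
    rw [ContinuousMap.integral_apply hΓint, hg x, convolution_def]
    simp [Γ, add_sub_assoc]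
  rw [this]
  exact Submodule.integral_mem (Submodule.isClosed_topologicalClosure _) hΓW

open scoped ContDiff in
theorem pow_mul_iteratedDeriv_mem_of_ridgeFunctions_subset {K : Set ℝ} [CompactSpace K]
    {W : Submodule ℝ C(K, ℝ)} (hW : IsClosed (W : Set C(K, ℝ))) {F : ℝ → ℝ}
    (hF : ContDiff ℝ ∞ F) (hFW : ridgeFunctions K F ⊆ W) (k : ℕ) (w b : ℝ) {g : C(K, ℝ)}
    (hg : ∀ x : K, g x = (x : ℝ) ^ k * iteratedDeriv k F (w * x + b)) : g ∈ W := by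
  induction k generalizing w g with
  | zero => exact hFW ⟨w, b, by simpa using hg⟩
  | succ k ih =>
    have hGc : Continuous (iteratedDeriv k F) :=
      hF.continuous_iteratedDeriv k (by exact_mod_cast le_top)
    let Ψ : ℝ → C(K, ℝ) := fun h =>
      ⟨fun x => (x : ℝ) ^ k * iteratedDeriv k F ((w + h) * x + b), by fun_prop⟩
    have hΨ : HasDerivAt Ψ g 0 := by
      refine ContinuousMap.hasDerivAt_of_apply_eq_mul_comp
        (fun y => ?_) (hF.continuous_iteratedDeriv (k + 1) (by exact_mod_cast le_top))
        (G := iteratedDeriv k F) (a := fun x : K => (x : ℝ) ^ k) (u := Subtype.val)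
        (v := fun x : K => w * x + b)
        (by fun_prop) (by fun_prop) (by fun_prop) (fun h x => ?_) (fun x => ?_)
      · rw [iteratedDeriv_succ]
        exact (hF.differentiable_iteratedDeriv k (by exact_mod_cast WithTop.coe_lt_top k)
          y).hasDerivAt
      · simp only [Ψ, ContinuousMap.coe_mk]
        ring_nf
      · rw [hg x]
        ring
    exact hΨ.mem_of_isClosed hW fun h => ih (w + h) fun x => rfl

theorem ContDiffBump.contDiff_normed_convolution (φ : ContDiffBump (0 : ℝ)) {σ : ℝ → ℝ}
    (hσ : LocallyIntegrable σ) {n : ℕ∞} :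
    ContDiff ℝ n (φ.normed volume ⋆[ContinuousLinearMap.lsmul ℝ ℝ] σ) :=
  φ.hasCompactSupport_normed.contDiff_convolution_left _ φ.contDiff_normed hσ

theorem ContDiffBump.abs_normed_convolution_le (φ : ContDiffBump (0 : ℝ)) {σ : ℝ → ℝ}
    (hσ : AEStronglyMeasurable σ) {C : ℝ} (hC : ∀ x, |σ x| ≤ C) (z : ℝ) :
    |(φ.normed volume ⋆[ContinuousLinearMap.lsmul ℝ ℝ] σ) z| ≤ C := by
  simpa [Real.dist_eq] using dist_convolution_le (z₀ := 0) ((abs_nonneg _).trans (hC 0))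
    φ.support_normed_eq.subset φ.nonneg_normed φ.integral_normed hσ
    (fun x _ => by simpa [Real.dist_eq] using hC x)

theorem exists_iteratedDeriv_normed_convolution_ne_zero {σ : ℝ → ℝ} (hσ : Continuous σ)
    {C : ℝ} (hC : ∀ x, |σ x| ≤ C) (hσ' : ∃ x y, σ x ≠ σ y) (k : ℕ) :
    ∃ (φ : ContDiffBump (0 : ℝ)) (b : ℝ),
      iteratedDeriv k (φ.normed volume ⋆[ContinuousLinearMap.lsmul ℝ ℝ] σ) b ≠ 0 := by
  by_contra! h
  obtain ⟨x, y, hxy⟩ := hσ'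
  have hconst (φ : ContDiffBump (0 : ℝ)) (z : ℝ) :
      (φ.normed volume ⋆[ContinuousLinearMap.lsmul ℝ ℝ] σ) z =
        (φ.normed volume ⋆[ContinuousLinearMap.lsmul ℝ ℝ] σ) 0 := by
    obtain ⟨P, hP⟩ := exists_eval_eq_of_iteratedDeriv_eq_zero
      (φ.contDiff_normed_convolution hσ.locallyIntegrable) (funext (h φ))
    have hPC := P.eq_C_of_forall_abs_eval_le fun z =>
      hP z ▸ φ.abs_normed_convolution_le hσ.aestronglyMeasurable hC z
    rw [hP, hP, hPC, eval_C, eval_C]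
  let φ (n : ℕ) : ContDiffBump (0 : ℝ) :=
    ⟨1 / (n + 1) / 2, 1 / (n + 1), by positivity, half_lt_self (by positivity)⟩
  have hφ : Tendsto (fun n => (φ n).rOut) atTop (𝓝 0) := tendsto_one_div_add_atTop_nhds_zero_nat
  refine hxy (tendsto_nhds_unique
    (ContDiffBump.convolution_tendsto_right_of_continuous (μ := volume) hφ hσ x) ?_)
  simpa only [hconst _ x, ← hconst _ y] using
    ContDiffBump.convolution_tendsto_right_of_continuous (μ := volume) hφ hσ y

theorem dense_span_ridgeFunctions {K : Set ℝ} [CompactSpace K] {σ : ℝ → ℝ} (hσ : Continuous σ)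
    {C : ℝ} (hC : ∀ x, |σ x| ≤ C) (hσ' : ∃ x y, σ x ≠ σ y) :
    Dense (Submodule.span ℝ (ridgeFunctions K σ) : Set C(K, ℝ)) := by
  set W := (Submodule.span ℝ (ridgeFunctions K σ)).topologicalClosure
  have hW : IsClosed (W : Set C(K, ℝ)) := Submodule.isClosed_topologicalClosure _
  have hmonomial (n : ℕ) : toContinuousMapOnAlgHom K (X ^ n) ∈ W := by
    obtain ⟨φ, b, hb⟩ := exists_iteratedDeriv_normed_convolution_ne_zero hσ hC hσ' n
    refine (W.smul_mem_iff hb).mp (pow_mul_iteratedDeriv_mem_of_ridgeFunctions_subset hW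
      (φ.contDiff_normed_convolution hσ.locallyIntegrable)
      (ridgeFunctions_convolution_subset hσ φ.continuous_normed φ.hasCompactSupport_normed)
      n 0 b fun x => ?_)
    simp only [toContinuousMapOnAlgHom_apply, ContinuousMap.coe_smul, Pi.smul_apply,
      toContinuousMapOn_apply, toContinuousMap_apply, eval_pow, eval_X, smul_eq_mul, zero_mul,
      zero_add]
    ring
  have hpoly : (polynomialFunctions K : Set C(K, ℝ)) ⊆ W := by
    rw [polynomialFunctions_coe]
    rintro _ ⟨P, rfl⟩
    induction P using Polynomial.induction_on' with
    | add P Q hP hQ => rw [map_add]; exact W.add_mem hP hQ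
    | monomial n a =>
      rw [← C_mul_X_pow_eq_monomial, ← smul_eq_C_mul, map_smul]
      exact W.smul_mem a (hmonomial n)
  rw [Submodule.dense_iff_topologicalClosure_eq_top, eq_top_iff]
  intro f _
  have hf : f ∈ (polynomialFunctions K).topologicalClosure := by
    rw [polynomialFunctions.topologicalClosure]; trivial
  exact closure_minimal hpoly hW hf

theorem exists_sum_eq_of_mem_span_ridgeFunctions {K : Set ℝ} {σ : ℝ → ℝ} {v : C(K, ℝ)}
    (hv : v ∈ Submodule.span ℝ (ridgeFunctions K σ)) :
    ∃ (m : ℕ) (c w b : Fin m → ℝ), ∀ x : K, v x = ∑ i, c i * σ (w i * x + b i) := by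
  obtain ⟨m, c, v, rfl⟩ := Submodule.mem_span_set'.mp hv
  choose w b hwb using fun i => (v i).2
  exact ⟨m, c, w, b, fun x => by simp [hwb]⟩

theorem MeasureTheory.MemLp.exists_mem_eLpNorm_sub_le {X : Type*} [TopologicalSpace X]
    [CompactSpace X] [NormalSpace X] [MeasurableSpace X] [BorelSpace X] {μ : Measure X}
    [IsFiniteMeasure μ] [μ.WeaklyRegular] {p : ℝ≥0∞} (hp : 1 ≤ p) (hp' : p ≠ ∞) {S : Set C(X, ℝ)} (hS : Dense S)
    {g : X → ℝ} (hg : MemLp g p μ) {ε : ℝ≥0∞} (hε : 0 < ε) :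
    ∃ s ∈ S, eLpNorm (⇑s - g) p μ ≤ ε := by
  have : Fact (1 ≤ p) := ⟨hp⟩
  have hdense := (ContinuousMap.toLp_denseRange ℝ μ ℝ hp').dense_image
    (ContinuousMap.toLp p μ ℝ).continuous hS
  obtain ⟨_, ⟨s, hs, rfl⟩, hsg⟩ := EMetric.mem_closure_iff.mp (hdense (hg.toLp g)) ε hε
  refine ⟨s, hs, ?_⟩
  rw [edist_comm, Lp.edist_def] at hsg
  rw [← eLpNorm_congr_ae ((ContinuousMap.coeFn_toLp (p := p) (𝕜 := ℝ) μ s).sub hg.coeFn_toLp)]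
  exact hsg.le

/-- Lemma 2 (classical universal approximation, after Cybenko/Hornik/Leshno et al.):
one-hidden-layer neural network functions `x ↦ ∑ i, c i * σ (w i * x + b i)` with a continuous,
bounded, non-polynomial activation `σ` are dense in `L^p(μ; ℝ)` on a compact set `K ⊆ ℝ`
equipped with a finite Borel measure `μ`, for `1 ≤ p < ∞`. -/
theorem mlp_universal_approximation_Lp
    (K : Set ℝ) (hK : IsCompact K)
    (μ : Measure K) [IsFiniteMeasure μ]
    (p : ℝ≥0∞) (hp : 1 ≤ p) (hp' : p ≠ ∞)
    (σ : ℝ → ℝ) (hσ_cont : Continuous σ) (hσ_bdd : ∃ C : ℝ, ∀ x : ℝ, |σ x| ≤ C)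
    (hσ_nonpoly : ¬ ∃ P : Polynomial ℝ, ∀ x : ℝ, σ x = P.eval x)
    (g : K → ℝ) (hg : MemLp g p μ) (ε : ℝ) (hε : 0 < ε) :
    ∃ (m : ℕ) (c w b : Fin m → ℝ),
      eLpNorm (fun x : K => (∑ i : Fin m, c i * σ (w i * (x : ℝ) + b i)) - g x) p μ
        ≤ ENNReal.ofReal ε := by
  have : CompactSpace K := isCompact_iff_compactSpace.mp hK
  have hσ_nonconst : ∃ x y, σ x ≠ σ y := by
    by_contra! h
    exact hσ_nonpoly ⟨C (σ 0), fun x => by rw [eval_C, h x 0]⟩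
  obtain ⟨C, hC⟩ := hσ_bdd
  obtain ⟨v, hv, hvg⟩ := hg.exists_mem_eLpNorm_sub_le hp hp'
    (dense_span_ridgeFunctions hσ_cont hC hσ_nonconst) (ENNReal.ofReal_pos.mpr hε)
  obtain ⟨m, c, w, b, hv⟩ := exists_sum_eq_of_mem_span_ridgeFunctions hv
  refine ⟨m, c, w, b, ?_⟩
  convert hvg using 2
  ext x
  rw [Pi.sub_apply, hv]
end

section
/- Let T > 0 and let μ be the Lebesgue measure restricted to the interval K = [0, T] ⊆ ℝ. Let p, q₁, q₂, q₃ ∈ [1, ∞) satisfy 1/p = 1/q₁ + 1/q₂ + 1/q₃, let m be a positive integer, and let C_CQ, C_C, C_grad be positive reals. Suppose u, v : K → ℝ are measurable with ‖u‖_{L^{q₁}(μ)} ≤ C_CQ / m and ‖v‖_{L^{q₂}(μ)} ≤ C_C, and suppose w : K → ℝ^m is measurable with |w_i(t)| ≤ C_grad for μ-almost every t ∈ K and every i ∈ {1, …, m}. Then the function G(t) = 2 · |u(t)| · |v(t)| · ‖w(t)‖₂ (with ‖·‖₂ the Euclidean norm on ℝ^m) satisfies ‖G‖_{L^p(μ)}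 ≤ 2 · C_C · C_grad · T^{1/q₃} · C_CQ / √m. -/
open MeasureTheory
open scoped ENNReal

/-!
Hölder's inequality for three factors, with `1/p = 1/q₁ + 1/q₂ + 1/q₃`, bounds the `L^p` norm of
`|u| |v| ‖w‖` by the product of the three norms. Since every coordinate of `w(t)` is at most
`C_grad`, `‖w(t)‖₂ ≤ √m C_grad`, so `‖w‖` has `L^{q₃}` norm at most `T^{1/q₃} √m C_grad` on
`[0, T]`; this `√m` cancels against the `1/m` in the bound on `u`, leaving `1/√m`.
-/

theorem EuclideanSpace.norm_le_sqrt_card_mul_of_forall_abs_le {ι : Type*} [Fintype ι]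
    {x : EuclideanSpace ℝ ι} {C : ℝ} (hC : 0 ≤ C) (hx : ∀ i, |x i| ≤ C) :
    ‖x‖ ≤ √(Fintype.card ι) * C :=
  calc ‖x‖ = √(∑ i, ‖x i‖ ^ 2) := EuclideanSpace.norm_eq x
    _ ≤ √(∑ _ : ι, C ^ 2) := by gcongr with i; exact hx i
    _ = √(Fintype.card ι) * C := by
      rw [Finset.sum_const, Finset.card_univ, nsmul_eq_mul, Real.sqrt_mul (Nat.cast_nonneg _),
        Real.sqrt_sq hC]

theorem MeasureTheory.eLpNorm_mul_mul_le {α 𝕜 : Type*} [MeasurableSpace α] {μ : Measure α}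
    [NormedRing 𝕜] {f g h : α → 𝕜} {p q₁ q₂ q₃ : ℝ≥0∞}
    (hf : AEStronglyMeasurable f μ) (hg : AEStronglyMeasurable g μ)
    (hh : AEStronglyMeasurable h μ) (hpq : 1 / p = 1 / q₁ + 1 / q₂ + 1 / q₃) :
    eLpNorm (f * g * h) p μ ≤ eLpNorm f q₁ μ * eLpNorm g q₂ μ * eLpNorm h q₃ μ := by
  set r := (q₁⁻¹ + q₂⁻¹)⁻¹
  have : ENNReal.HolderTriple q₁ q₂ r := ⟨by rw [inv_inv]⟩
  have : ENNReal.HolderTriple r q₃ p := ⟨by simpa [r] using hpq.symm⟩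
  calc eLpNorm (f * g * h) p μ ≤ eLpNorm (f * g) r μ * eLpNorm h q₃ μ := by
        simpa only [smul_eq_mul] using eLpNorm_smul_le_mul_eLpNorm (r := p) hh (hf.mul hg)
    _ ≤ eLpNorm f q₁ μ * eLpNorm g q₂ μ * eLpNorm h q₃ μ := by
        gcongr
        simpa only [smul_eq_mul] using eLpNorm_smul_le_mul_eLpNorm (r := r) hg hf

theorem barren_plateau_mitigation_gradient_bound_general
    (T : ℝ) (hT : 0 < T)
    (p q₁ q₂ q₃ : ℝ≥0∞)
    (hpq : 1 / p = 1 / q₁ + 1 / q₂ + 1 / q₃)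
    (m : ℕ)
    (C_CQ C_C C_grad : ℝ) (hCQ : 0 < C_CQ) (hC : 0 < C_C) (hgrad : 0 < C_grad)
    (u v : ℝ → ℝ) (w : ℝ → EuclideanSpace ℝ (Fin m))
    (hu_meas : AEStronglyMeasurable u (volume.restrict (Set.Icc (0 : ℝ) T)))
    (hv_meas : AEStronglyMeasurable v (volume.restrict (Set.Icc (0 : ℝ) T)))
    (hw_meas : AEStronglyMeasurable w (volume.restrict (Set.Icc (0 : ℝ) T)))
    (hu : eLpNorm u q₁ (volume.restrict (Set.Icc (0 : ℝ) T)) ≤ ENNReal.ofReal (C_CQ / m))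
    (hv : eLpNorm v q₂ (volume.restrict (Set.Icc (0 : ℝ) T)) ≤ ENNReal.ofReal C_C)
    (hw : ∀ᵐ t ∂(volume.restrict (Set.Icc (0 : ℝ) T)), ∀ i : Fin m, |w t i| ≤ C_grad) :
    eLpNorm (fun t => 2 * |u t| * |v t| * ‖w t‖) p (volume.restrict (Set.Icc (0 : ℝ) T))
      ≤ ENNReal.ofReal (2 * C_C * C_grad * T ^ (1 / q₃.toReal) * C_CQ / Real.sqrt m) := by
  set μ := volume.restrict (Set.Icc (0 : ℝ) T)
  have hμ : μ Set.univ = ENNReal.ofReal T := by simp [μ]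
  have hw_norm : ∀ᵐ t ∂μ, ‖‖w t‖‖ ≤ C_grad * √m := by
    filter_upwards [hw] with t ht
    rw [norm_norm, mul_comm]
    simpa using EuclideanSpace.norm_le_sqrt_card_mul_of_forall_abs_le hgrad.le ht
  have hG : (fun t => 2 * |u t| * |v t| * ‖w t‖)
      = (2 : ℝ) • ((fun t => ‖u t‖) * (fun t => ‖v t‖) * fun t => ‖w t‖) := by
    ext t; simp only [Pi.smul_apply, Pi.mul_apply, smul_eq_mul, Real.norm_eq_abs]; ring
  calc eLpNorm (fun t => 2 * |u t| * |v t| * ‖w t‖) p μ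
      ≤ 2 * (eLpNorm u q₁ μ * eLpNorm v q₂ μ * eLpNorm (fun t => ‖w t‖) q₃ μ) := by
        rw [hG, eLpNorm_const_smul, Real.enorm_eq_ofReal zero_le_two, ENNReal.ofReal_ofNat,
          ← eLpNorm_norm u, ← eLpNorm_norm v]
        gcongr
        exact eLpNorm_mul_mul_le hu_meas.norm hv_meas.norm hw_meas.norm hpq
    _ ≤ 2 * (ENNReal.ofReal (C_CQ / m) * ENNReal.ofReal C_C
          * (ENNReal.ofReal T ^ q₃.toReal⁻¹ * ENNReal.ofReal (C_grad * √m))) := by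
        gcongr
        exact hμ ▸ eLpNorm_le_of_ae_bound hw_norm
    _ = ENNReal.ofReal (2 * C_C * C_grad * T ^ (1 / q₃.toReal) * C_CQ / Real.sqrt m) := by
        rw [ENNReal.ofReal_rpow_of_pos hT, ← ENNReal.ofReal_mul (by positivity),
          ← ENNReal.ofReal_mul (by positivity), ← ENNReal.ofReal_mul (by positivity),
          ← ENNReal.ofReal_ofNat 2, ← ENNReal.ofReal_mul zero_le_two]
        congr 1
        rw [div_eq_mul_inv _ √m, ← Real.sqrt_div_self, one_div]
        ring

/-- Corollary 1 (mitigation of barren plateaus, eqs. 66–77), abstracted: on `K = [0, T]` with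
Lebesgue measure, if the residual `u` has `L^{q₁}`-norm at most `C_CQ/m`, the classical factor
`v` has `L^{q₂}`-norm at most `C_C`, and each of the `m` components of the quantum gradient `w`
is a.e. bounded by `C_grad`, then the pointwise gradient magnitude
`G(t) = 2|u(t)||v(t)|‖w(t)‖₂` satisfies the `O(1/√m)` bound
`‖G‖_{L^p} ≤ 2 C_C C_grad T^{1/q₃} C_CQ / √m`. -/
theorem barren_plateau_mitigation_gradient_bound
    (T : ℝ) (hT : 0 < T)
    (p q₁ q₂ q₃ : ℝ≥0∞)
    (hp : 1 ≤ p) (hq₁ : 1 ≤ q₁) (hq₂ : 1 ≤ q₂) (hq₃ : 1 ≤ q₃)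
    (hp' : p ≠ ∞) (hq₁' : q₁ ≠ ∞) (hq₂' : q₂ ≠ ∞) (hq₃' : q₃ ≠ ∞)
    (hpq : 1 / p = 1 / q₁ + 1 / q₂ + 1 / q₃)
    (m : ℕ) (hm : 0 < m)
    (C_CQ C_C C_grad : ℝ) (hCQ : 0 < C_CQ) (hC : 0 < C_C) (hgrad : 0 < C_grad)
    (u v : ℝ → ℝ) (w : ℝ → EuclideanSpace ℝ (Fin m))
    (hu_meas : AEStronglyMeasurable u (volume.restrict (Set.Icc (0 : ℝ) T)))
    (hv_meas : AEStronglyMeasurable v (volume.restrict (Set.Icc (0 : ℝ) T)))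
    (hw_meas : AEStronglyMeasurable w (volume.restrict (Set.Icc (0 : ℝ) T)))
    (hu : eLpNorm u q₁ (volume.restrict (Set.Icc (0 : ℝ) T)) ≤ ENNReal.ofReal (C_CQ / m))
    (hv : eLpNorm v q₂ (volume.restrict (Set.Icc (0 : ℝ) T)) ≤ ENNReal.ofReal C_C)
    (hw : ∀ᵐ t ∂(volume.restrict (Set.Icc (0 : ℝ) T)), ∀ i : Fin m, |w t i| ≤ C_grad) :
    eLpNorm (fun t => 2 * |u t| * |v t| * ‖w t‖) p (volume.restrict (Set.Icc (0 : ℝ) T))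
      ≤ ENNReal.ofReal (2 * C_C * C_grad * T ^ (1 / q₃.toReal) * C_CQ / Real.sqrt m) :=
  barren_plateau_mitigation_gradient_bound_general T hT p q₁ q₂ q₃ hpq m C_CQ C_C C_grad hCQ hC
    hgrad u v w hu_meas hv_meas hw_meas hu hv hw
end
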